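/- For the five bodies placed at q_i = r_i (cos(2π(i−1)/5), sin(2π(i−1)/5)), i = 1,...,5, with r_1 = 1, the center-of-mass conditions Σ_{i=1}^{5} r_i cos(2π(i−1)/5) = 0 and Σ_{i=1}^{5} r_i sin(2π(i−1)/5) = 0 determine r_2 and r_4 uniquely as affine functions of (r_3, r_5), and the solutions satisfy r_2 > 0 and r_4 > 0 if and only if r_5 > r_3 − (√5 − 1)/2 and r_5 > ((√5 + 1)/2)(r_3 − 1). -/
import Mathlib

open Real

lemma aux_cos2 : Real.cos (2 * Real.pi / 5) = (Real.sqrt 5 - 1) / 4 := by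
  have h : (2 : ℝ) * Real.pi / 5 = 2 * (Real.pi / 5) := by ring
  have h5 : Real.sqrt 5 ^ 2 = 5 := Real.sq_sqrt (by norm_num)
  rw [h, Real.cos_two_mul, Real.cos_pi_div_five]
  nlinarith [h5]

lemma aux_cos4 : Real.cos (4 * Real.pi / 5) = -((Real.sqrt 5 + 1) / 4) := by
  have h : (4 : ℝ) * Real.pi / 5 = Real.pi - Real.pi / 5 := by ring
  rw [h, Real.cos_pi_sub, Real.cos_pi_div_five]; ring

lemma aux_cos6 : Real.cos (6 * Real.pi / 5) = -((Real.sqrt 5 + 1) / 4) := by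
  have h : (6 : ℝ) * Real.pi / 5 = Real.pi / 5 + Real.pi := by ring
  rw [h, Real.cos_add_pi, Real.cos_pi_div_five]; ring

lemma aux_cos8 : Real.cos (8 * Real.pi / 5) = (Real.sqrt 5 - 1) / 4 := by
  have h : (8 : ℝ) * Real.pi / 5 = -(2 * Real.pi / 5) + 2 * Real.pi := by ring
  rw [h, Real.cos_add_two_pi, Real.cos_neg, aux_cos2]

lemma aux_sin4 : Real.sin (4 * Real.pi / 5) = Real.sin (Real.pi / 5) := by
  have h : (4 : ℝ) * Real.pi / 5 = Real.pi - Real.pi / 5 := by ring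
  rw [h, Real.sin_pi_sub]

lemma aux_sin6 : Real.sin (6 * Real.pi / 5) = -Real.sin (Real.pi / 5) := by
  have h : (6 : ℝ) * Real.pi / 5 = Real.pi / 5 + Real.pi := by ring
  rw [h, Real.sin_add_pi]

lemma aux_sin8 : Real.sin (8 * Real.pi / 5) = -Real.sin (2 * Real.pi / 5) := by
  have h : (8 : ℝ) * Real.pi / 5 = -(2 * Real.pi / 5) + 2 * Real.pi := by ring
  rw [h, Real.sin_add_two_pi, Real.sin_neg]

lemma aux_sin_rel :
    Real.sin (Real.pi / 5) = (Real.sqrt 5 - 1) / 2 * Real.sin (2 * Real.pi / 5) := by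
  have h : (2 : ℝ) * Real.pi / 5 = 2 * (Real.pi / 5) := by ring
  have h5 : Real.sqrt 5 ^ 2 = 5 := Real.sq_sqrt (by norm_num)
  rw [h, Real.sin_two_mul, Real.cos_pi_div_five]
  nlinarith [h5, Real.sin_nonneg_of_nonneg_of_le_pi (x := Real.pi/5) (by positivity)
    (by nlinarith [Real.pi_pos])]

lemma aux_sin2_pos : 0 < Real.sin (2 * Real.pi / 5) := by
  apply Real.sin_pos_of_pos_of_lt_pi
  · positivity
  · nlinarith [Real.pi_pos]

/-- The center-of-mass conditions determine `r₂` and `r₄` uniquely, and the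
solutions are positive iff `r₅ > r₃ − b/2` and `r₅ > a(r₃ − 1)/2` with
`b = √5 − 1`, `a = √5 + 1`. -/
theorem center_of_mass_r2_r4 (r3 r5 : ℝ) :
    (∃! p : ℝ × ℝ,
      Real.cos 0 + p.1 * Real.cos (2 * Real.pi / 5) +
        r3 * Real.cos (4 * Real.pi / 5) + p.2 * Real.cos (6 * Real.pi / 5) +
        r5 * Real.cos (8 * Real.pi / 5) = 0 ∧
      Real.sin 0 + p.1 * Real.sin (2 * Real.pi / 5) +
        r3 * Real.sin (4 * Real.pi / 5) + p.2 * Real.sin (6 * Real.pi / 5) +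
        r5 * Real.sin (8 * Real.pi / 5) = 0) ∧
    ∀ p : ℝ × ℝ,
      (Real.cos 0 + p.1 * Real.cos (2 * Real.pi / 5) +
        r3 * Real.cos (4 * Real.pi / 5) + p.2 * Real.cos (6 * Real.pi / 5) +
        r5 * Real.cos (8 * Real.pi / 5) = 0 ∧
      Real.sin 0 + p.1 * Real.sin (2 * Real.pi / 5) +
        r3 * Real.sin (4 * Real.pi / 5) + p.2 * Real.sin (6 * Real.pi / 5) +
        r5 * Real.sin (8 * Real.pi / 5) = 0) →
      (0 < p.1 ∧ 0 < p.2 ↔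
        r3 - (Real.sqrt 5 - 1) / 2 < r5 ∧
        (Real.sqrt 5 + 1) * (r3 - 1) / 2 < r5) := by
  set t := Real.sqrt 5 with ht
  have h5 : t ^ 2 = 5 := Real.sq_sqrt (by norm_num)
  have ht2 : 2 < t := by nlinarith [Real.sqrt_nonneg 5, h5]
  set s1 := Real.sin (2 * Real.pi / 5) with hs1
  have hs1pos : 0 < s1 := aux_sin2_pos
  set p0 : ℝ × ℝ := ((t + 1) / 2 * (r5 - r3) + 1, r5 - (t + 1) * (r3 - 1) / 2) with hp0
  have key : ∀ p : ℝ × ℝ,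
      (Real.cos 0 + p.1 * Real.cos (2 * Real.pi / 5) +
        r3 * Real.cos (4 * Real.pi / 5) + p.2 * Real.cos (6 * Real.pi / 5) +
        r5 * Real.cos (8 * Real.pi / 5) = 0 ∧
      Real.sin 0 + p.1 * Real.sin (2 * Real.pi / 5) +
        r3 * Real.sin (4 * Real.pi / 5) + p.2 * Real.sin (6 * Real.pi / 5) +
        r5 * Real.sin (8 * Real.pi / 5) = 0) ↔ p = p0 := by
    intro p
    rw [Real.cos_zero, Real.sin_zero, aux_cos2, aux_cos4, aux_cos6, aux_cos8,
      aux_sin4, aux_sin6, aux_sin8, aux_sin_rel, ← ht, ← hs1]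
    constructor
    · rintro ⟨e1, e2⟩
      have h2' : p.1 + (t - 1) / 2 * r3 - (t - 1) / 2 * p.2 - r5 = 0 := by
        have hmul : s1 * (p.1 + (t - 1) / 2 * r3 - (t - 1) / 2 * p.2 - r5) = 0 := by
          linear_combination e2
        rcases mul_eq_zero.1 hmul with h | h
        · exact absurd h (ne_of_gt hs1pos)
        · exact h
      have hp2 : p.2 = r5 - (t + 1) * (r3 - 1) / 2 := by
        linear_combination (-(1 + t) / 2) * e1 + ((t ^ 2 - 1) / 8) * h2' +
          ((t - 3) / 16 * p.2 - (t + 1) / 16 * r3 + 1 / 4 * r5) * h5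
      have hp1 : p.1 = (t + 1) / 2 * (r5 - r3) + 1 := by
        linear_combination h2' + ((t - 1) / 2) * hp2 + ((1 - r3) / 4) * h5
      exact Prod.ext hp1 hp2
    · rintro rfl
      constructor
      · show (1 : ℝ) + ((t + 1) / 2 * (r5 - r3) + 1) * ((t - 1) / 4) + _ + _ + _ = 0
        linear_combination ((r5 - 1) / 8) * h5
      · show (0 : ℝ) + ((t + 1) / 2 * (r5 - r3) + 1) * s1 + _ + _ + _ = 0
        linear_combination (s1 * (r3 - 1) / 4) * h5
  constructor
  · exact ⟨p0, (key p0).2 rfl, fun p hp => (key p).1 hp⟩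
  · intro p hp
    have hpp : p = p0 := (key p).1 hp
    subst hpp
    constructor
    · rintro ⟨h1, h2⟩
      simp only [hp0] at h1 h2
      constructor
      · nlinarith [h1, h5, ht2]
      · linarith
    · rintro ⟨h1, h2⟩
      constructor
      · show 0 < (t + 1) / 2 * (r5 - r3) + 1
        nlinarith [h5, ht2]
      · show 0 < r5 - (t + 1) * (r3 - 1) / 2
        linarith
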